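/- arXiv:2603.06027 — 2 statements merged into one kernel-verified Lean document; each statement's English description precedes it below -/
import Mathlib

section
/- There exists a constant C > 0 such that for every even positive integer d, |H_d(0) − (−1)^{d/2} · (2/π)^{1/4} · d^{−1/4}| ≤ C · d^{−5/4}. -/
open MeasureTheory ProbabilityTheory Real

/-- The `d`-th normalized Hermite polynomial (as a function on `ℝ`): the monic
probabilist's Hermite polynomial divided by `√(d!)`. -/
noncomputable def normHermite (d : ℕ) (x : ℝ) : ℝ :=
  Polynomial.aeval x (Polynomial.hermite d) / Real.sqrt (Nat.factorial d)

/-!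
For `d = 2m`, `H_d(0) = (-1)^m s` with `s = (2m-1)‼ / √((2m)!)`, and `s⁴ (2m+1)` is the reciprocal
of the `m`-th partial Wallis product `W m`. The two-sided Wallis bounds
`(2m+1)/(2m+2) · π/2 ≤ W m ≤ π/2` pin `s⁴` between `2/(π(d+1))` and `2/(πd) = u⁴`, where
`u = (2/π)^{1/4} d^{-1/4}`.
Since `(u - s) u³ ≤ u⁴ - s⁴`, this gives `|s - u| ≤ u/d = (2/π)^{1/4} d^{-5/4}`.
-/

open Nat Polynomial

theorem Nat.factorial_two_mul (m : ℕ) : (2 * m)! = 2 ^ m * m ! * (2 * m - 1)‼ := by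
  rcases m with _ | m
  · rfl
  · rw [show 2 * (m + 1) = 2 * m + 1 + 1 by ring, factorial_eq_mul_doubleFactorial,
      show 2 * m + 1 + 1 = 2 * (m + 1) by ring, doubleFactorial_two_mul]
    rfl

theorem aeval_zero_hermite_two_mul (m : ℕ) :
    aeval (0 : ℝ) (hermite (2 * m)) = (-1) ^ m * (2 * m - 1)‼ := by
  have h := coeff_hermite_explicit m 0
  rw [add_zero, Nat.choose_zero_right, Nat.cast_one, mul_one] at h
  rw [aeval_def, eval₂_at_zero, h]
  simp

theorem normHermite_two_mul_zero (m : ℕ) :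
    normHermite (2 * m) 0 = (-1) ^ m * ((2 * m - 1)‼ / √(2 * m)! : ℝ) := by
  rw [normHermite, aeval_zero_hermite_two_mul, mul_div_assoc]

theorem Real.Wallis.W_mul_doubleFactorial_div_sqrt_factorial_pow_four (m : ℕ) :
    W m * ((2 * m - 1)‼ / √(2 * m)! : ℝ) ^ 4 * (2 * m + 1) = 1 := by
  have hfac : ((2 * m)! : ℝ) = 2 ^ m * m ! * (2 * m - 1)‼ := by
    exact_mod_cast Nat.factorial_two_mul m
  have hsqrt : √((2 * m)! : ℝ) ^ 4 = ((2 * m)! : ℝ) ^ 2 := by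
    rw [show 4 = 2 * 2 from rfl, pow_mul, sq_sqrt (by positivity)]
  rw [Wallis.W_eq_factorial_ratio, div_pow, hsqrt, hfac]
  have : (0 : ℝ) < (2 * m - 1)‼ := by exact_mod_cast doubleFactorial_pos _
  field_simp
  ring

theorem sub_mul_pow_le_pow_sub_pow {s u : ℝ} (n : ℕ) (hs : 0 ≤ s) (hsu : s ≤ u) :
    (u - s) * u ^ n ≤ u ^ (n + 1) - s ^ (n + 1) := by
  rw [← geom_sum₂_mul, mul_comm]
  gcongr
  simpa using Finset.single_le_sum (f := fun i => u ^ i * s ^ (n + 1 - 1 - i))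
    (fun i _ => mul_nonneg (pow_nonneg (hs.trans hsu) i) (pow_nonneg hs _))
    (Finset.self_mem_range_succ n)

theorem abs_sub_le_div_of_pow_bounds {s u d : ℝ} (n : ℕ) (hs : 0 ≤ s) (hu : 0 ≤ u) (hd : 0 < d)
    (h_upper : s ^ (n + 1) ≤ u ^ (n + 1)) (h_lower : u ^ (n + 1) * d ≤ s ^ (n + 1) * (d + 1)) :
    |s - u| ≤ u / d := by
  have hsu : s ≤ u := le_of_pow_le_pow_left₀ n.succ_ne_zero hu h_upper
  rw [abs_sub_comm, abs_of_nonneg (sub_nonneg.mpr hsu), le_div_iff₀ hd]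
  rcases hu.eq_or_lt with rfl | hu
  · simp [le_antisymm hsu hs]
  refine le_of_mul_le_mul_right ?_ (pow_pos hu n)
  calc (u - s) * d * u ^ n = (u - s) * u ^ n * d := by ring
    _ ≤ (u ^ (n + 1) - s ^ (n + 1)) * d := by gcongr; exact sub_mul_pow_le_pow_sub_pow n hs hsu
    _ ≤ u ^ (n + 1) := by linarith
    _ = u * u ^ n := pow_succ' u n

theorem doubleFactorial_div_sqrt_factorial_pow_four_bounds (m : ℕ) :
    2 / π ≤ ((2 * m - 1)‼ / √(2 * m)! : ℝ) ^ 4 * (2 * m + 1) ∧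
      ((2 * m - 1)‼ / √(2 * m)! : ℝ) ^ 4 * (2 * m) ≤ 2 / π := by
  have hW := Real.Wallis.W_mul_doubleFactorial_div_sqrt_factorial_pow_four m
  set x := ((2 * m - 1)‼ / √(2 * m)! : ℝ) ^ 4
  have ht : 0 ≤ x * (2 * m + 1) := by positivity
  constructor
  · have := mul_le_mul_of_nonneg_right (Real.Wallis.W_le m) ht
    rw [div_le_iff₀ pi_pos]
    linarith
  · have := mul_le_mul_of_nonneg_right (Real.Wallis.le_W m)
      (mul_nonneg ht (by positivity : (0 : ℝ) ≤ 2 * m + 2))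
    rw [le_div_iff₀ pi_pos]
    have hle : x * π * (2 * m + 1) ^ 2 ≤ 2 * (2 * m + 2) := by
      field_simp at this
      nlinarith
    nlinarith [m.cast_nonneg (α := ℝ)]

theorem Real.rpow_quarter_mul_rpow_neg_quarter_pow_four {a b : ℝ} (ha : 0 ≤ a) (hb : 0 ≤ b) :
    (a ^ ((1 : ℝ) / 4) * b ^ (-(1 : ℝ) / 4)) ^ 4 = a / b := by
  rw [mul_pow, ← rpow_natCast, ← rpow_natCast (b ^ _), ← rpow_mul ha, ← rpow_mul hb]
  norm_num [rpow_neg_one, div_eq_mul_inv]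

theorem stmt_10 :
    ∃ C : ℝ, 0 < C ∧ ∀ d : ℕ, 0 < d → Even d →
      |normHermite d 0 - (-1 : ℝ) ^ (d / 2) * (2 / π) ^ ((1 : ℝ) / 4) * (d : ℝ) ^ (-(1 : ℝ) / 4)|
        ≤ C * (d : ℝ) ^ (-(5 : ℝ) / 4) := by
  refine ⟨(2 / π) ^ ((1 : ℝ) / 4), by positivity, fun d hd hev => ?_⟩
  obtain ⟨m, rfl⟩ := even_iff_two_dvd.mp hev
  have hd_real : (0 : ℝ) < (2 * m : ℕ) := by exact_mod_cast hd
  set u := (2 / π) ^ ((1 : ℝ) / 4) * ((2 * m : ℕ) : ℝ) ^ (-(1 : ℝ) / 4)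
  have hu4 : u ^ 4 = 2 / π / (2 * m : ℕ) :=
    rpow_quarter_mul_rpow_neg_quarter_pow_four (by positivity) hd_real.le
  have hud : u / (2 * m : ℕ) = (2 / π) ^ ((1 : ℝ) / 4) * ((2 * m : ℕ) : ℝ) ^ (-(5 : ℝ) / 4) := by
    rw [mul_div_assoc, ← rpow_sub_one hd_real.ne']
    norm_num
  obtain ⟨h_lower, h_upper⟩ := doubleFactorial_div_sqrt_factorial_pow_four_bounds m
  rw [normHermite_two_mul_zero, Nat.mul_div_cancel_left m two_pos, mul_assoc, ← mul_sub, abs_mul,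
    abs_pow, abs_neg, abs_one, one_pow, one_mul, ← hud]
  apply abs_sub_le_div_of_pow_bounds 3 (by positivity) (by positivity) hd_real
  · rw [hu4, le_div_iff₀ hd_real]
    exact_mod_cast h_upper
  · rw [hu4, div_mul_cancel₀ _ hd_real.ne']
    exact_mod_cast h_lower
end

section
/- There exists a constant C > 0 such that for every positive integer d and every t ∈ [0, d^{1/6}], |H_d(t)| · e^{−t²/4} ≤ C · d^{−1/4}. -/
open MeasureTheory ProbabilityTheory Real

/-!
The Hermite function `u(t) = Hₙ(t) e^{-t²/4}` solves Weber's equation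
`u'' + (n + 1/2 - t²/4) u = 0`, so by Sonin's argument the energy `u'² + (n + 1/2 - t²/4) u²`
is nonincreasing for `t ≥ 0`. Its value at `0` comes from the constant and linear coefficients
of `Hₙ`, which are double factorials, and Wallis' inequality `(2m+1)((2m-1)‼)² ≤ ((2m)‼)²`
bounds it by `2 n! √n`. For `t² ≤ n` the coefficient `n + 1/2 - t²/4` is at least `n/2`, whence
`u(t)² ≤ 4 n! / √n`, i.e. `|Hₙ(t)/√n!| e^{-t²/4} ≤ 2 n^{-1/4}`.
-/

open Polynomial
open scoped Nat

namespace Polynomial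

theorem derivative_hermite_succ :
    ∀ n : ℕ, derivative (hermite (n + 1)) = ((n : ℤ[X]) + 1) * hermite n
  | 0 => by simp [hermite_zero]
  | n + 1 => by
    have h : derivative (hermite n) = X * hermite n - hermite (n + 1) := by
      rw [hermite_succ]; ring
    rw [hermite_succ (n + 1), derivative_sub, derivative_mul, derivative_X,
      derivative_hermite_succ n, derivative_mul, h]
    simp only [derivative_add, derivative_natCast, derivative_one]
    push_cast
    ring

theorem derivative_derivative_hermite (n : ℕ) :
    derivative (derivative (hermite n)) = X * derivative (hermite n) - (n : ℤ[X]) * hermite n := by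
  have h : derivative (hermite n) = X * hermite n - hermite (n + 1) := by
    rw [hermite_succ]; ring
  nth_rewrite 1 [h]
  rw [derivative_sub, derivative_mul, derivative_X, derivative_hermite_succ n]
  ring

end Polynomial

theorem Nat.two_mul_add_one_mul_doubleFactorial_sq_le (m : ℕ) :
    (2 * m + 1) * (2 * m - 1)‼ ^ 2 ≤ (2 * m)‼ ^ 2 := by
  induction m with
  | zero => simp
  | succ m ih =>
    rw [show 2 * (m + 1) - 1 = 2 * m + 1 by omega, show 2 * (m + 1) = 2 * m + 2 by ring,
      Nat.doubleFactorial_add_one, Nat.doubleFactorial_add_two]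
    have h : (2 * m + 3) * (2 * m + 1) ≤ (2 * m + 2) ^ 2 := by nlinarith
    calc (2 * m + 2 + 1) * ((2 * m + 1) * (2 * m - 1)‼) ^ 2
        = (2 * m + 3) * (2 * m + 1) * ((2 * m + 1) * (2 * m - 1)‼ ^ 2) := by ring
      _ ≤ (2 * m + 2) ^ 2 * (2 * m)‼ ^ 2 := Nat.mul_le_mul h ih
      _ = ((2 * m + 2) * (2 * m)‼) ^ 2 := by ring

/-- For a solution of `u'' + q u = 0`, the energy `u'² + q u²` has derivative `q' u²`. -/
theorem antitoneOn_energy {u v q q' : ℝ → ℝ} {D : Set ℝ} (hD : Convex ℝ D)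
    (hu : ∀ t, HasDerivAt u (v t) t) (hv : ∀ t, HasDerivAt v (-(q t * u t)) t)
    (hq : ∀ t, HasDerivAt q (q' t) t) (hq' : ∀ t ∈ interior D, q' t ≤ 0) :
    AntitoneOn (fun t => v t ^ 2 + q t * u t ^ 2) D := by
  have hE (t : ℝ) : HasDerivAt (fun t => v t ^ 2 + q t * u t ^ 2) (q' t * u t ^ 2) t :=
    (((hv t).fun_pow 2).fun_add ((hq t).fun_mul ((hu t).fun_pow 2))).congr_deriv (by norm_num; ring)
  refine antitoneOn_of_hasDerivWithinAt_nonpos hD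
    (fun t _ => (hE t).continuousAt.continuousWithinAt) (fun t _ => (hE t).hasDerivWithinAt)
    (fun t ht => mul_nonpos_of_nonpos_of_nonneg (hq' t ht) (sq_nonneg _))

noncomputable def hermiteFun (n : ℕ) (t : ℝ) : ℝ :=
  aeval t (hermite n) * exp (-t ^ 2 / 4)

noncomputable def hermiteFunDeriv (n : ℕ) (t : ℝ) : ℝ :=
  (aeval t (derivative (hermite n)) - t / 2 * aeval t (hermite n)) * exp (-t ^ 2 / 4)

noncomputable def hermiteEnergy (n : ℕ) (t : ℝ) : ℝ :=
  hermiteFunDeriv n t ^ 2 + (n + 1 / 2 - t ^ 2 / 4) * hermiteFun n t ^ 2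

theorem hasDerivAt_exp_neg_sq_div_four (t : ℝ) :
    HasDerivAt (fun t => exp (-t ^ 2 / 4)) (-(t / 2) * exp (-t ^ 2 / 4)) t := by
  have h : HasDerivAt (fun t : ℝ => -t ^ 2 / 4) (-(t / 2)) t :=
    ((hasDerivAt_pow 2 t).neg.div_const 4).congr_deriv (by ring)
  simpa [mul_comm] using h.exp

theorem hasDerivAt_hermiteFun (n : ℕ) (t : ℝ) : HasDerivAt (hermiteFun n) (hermiteFunDeriv n t) t :=
  (((hermite n).hasDerivAt_aeval t).mul (hasDerivAt_exp_neg_sq_div_four t)).congr_deriv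
    (by rw [hermiteFunDeriv]; ring)

theorem hasDerivAt_hermiteFunDeriv (n : ℕ) (t : ℝ) :
    HasDerivAt (hermiteFunDeriv n) (-((n + 1 / 2 - t ^ 2 / 4) * hermiteFun n t)) t := by
  have hode : aeval t (derivative (derivative (hermite n)))
      = t * aeval t (derivative (hermite n)) - n * aeval t (hermite n) := by
    simp [derivative_derivative_hermite]
  have h := ((((derivative (hermite n)).hasDerivAt_aeval t).fun_sub
    (((hasDerivAt_id' t).div_const 2).fun_mul ((hermite n).hasDerivAt_aeval t))).fun_mul
    (hasDerivAt_exp_neg_sq_div_four t))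
  exact h.congr_deriv (by rw [hode, hermiteFun]; ring)

theorem antitoneOn_hermiteEnergy (n : ℕ) : AntitoneOn (hermiteEnergy n) (Set.Ici 0) := by
  have hq (t : ℝ) : HasDerivAt (fun t : ℝ => n + 1 / 2 - t ^ 2 / 4) (-(t / 2)) t :=
    ((hasDerivAt_pow 2 t).div_const 4).const_sub _ |>.congr_deriv (by ring)
  refine antitoneOn_energy (convex_Ici 0) (hasDerivAt_hermiteFun n) (hasDerivAt_hermiteFunDeriv n)
    hq fun t ht => ?_
  rw [interior_Ici] at ht
  linarith [ht.out]

theorem hermiteFun_zero (n : ℕ) : hermiteFun n 0 = (hermite n).coeff 0 := by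
  simp [hermiteFun, aeval_def, eval₂_at_zero]

theorem hermiteFunDeriv_zero (n : ℕ) : hermiteFunDeriv n 0 = (hermite n).coeff 1 := by
  simp [hermiteFunDeriv, aeval_def, eval₂_at_zero, coeff_derivative]

theorem hermiteEnergy_zero_sq_le {n : ℕ} (hn : 0 < n) :
    hermiteEnergy n 0 ^ 2 ≤ 4 * n * (n ! : ℝ) ^ 2 := by
  rcases Nat.even_or_odd' n with ⟨m, rfl | rfl⟩
  all_goals
    have hwallis : (2 * m + 1 : ℝ) * ((2 * m - 1)‼ : ℝ) ^ 2 ≤ ((2 * m)‼ : ℝ) ^ 2 := by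
      exact_mod_cast Nat.two_mul_add_one_mul_doubleFactorial_sq_le m
    have hsign : ((-1 : ℝ) ^ m) ^ 2 = 1 := by rw [← pow_mul, pow_mul', neg_one_sq, one_pow]
  · have hm : (1 : ℝ) ≤ m := by exact_mod_cast (by omega : 1 ≤ m)
    have h0 : (hermite (2 * m)).coeff 0 = (-1) ^ m * (2 * m - 1)‼ := by
      simpa using coeff_hermite_explicit m 0
    have h1 : (hermite (2 * m)).coeff 1 = 0 := coeff_hermite_of_odd_add ⟨m, by ring⟩
    have hfac : (2 * m)! = (2 * m)‼ * (2 * m - 1)‼ := by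
      have := Nat.factorial_eq_mul_doubleFactorial (2 * m - 1)
      rwa [Nat.sub_add_cancel (by omega)] at this
    rw [hermiteEnergy, hermiteFun_zero, hermiteFunDeriv_zero, h0, h1, hfac]
    push_cast
    simp only [mul_pow, hsign]
    have hcoef : (2 * m + 1 / 2 : ℝ) ^ 2 ≤ 8 * m * (2 * m + 1) := by nlinarith
    nlinarith [mul_le_mul_of_nonneg_left hwallis (by positivity : (0 : ℝ) ≤ 8 * m * (2 * m - 1)‼ ^ 2),
      mul_le_mul_of_nonneg_right hcoef (by positivity : (0 : ℝ) ≤ (2 * m - 1)‼ ^ 4)]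
  · have h0 : (hermite (2 * m + 1)).coeff 0 = 0 := coeff_hermite_of_odd_add ⟨m, by ring⟩
    have h1 : (hermite (2 * m + 1)).coeff 1 = (-1) ^ m * (2 * m - 1)‼ * (2 * m + 1) := by
      simpa using coeff_hermite_explicit m 1
    have hfac : (2 * m + 1)! = (2 * m + 1) * (2 * m - 1)‼ * (2 * m)‼ := by
      rw [Nat.factorial_eq_mul_doubleFactorial, Nat.doubleFactorial_add_one]
    rw [hermiteEnergy, hermiteFun_zero, hermiteFunDeriv_zero, h0, h1, hfac]
    push_cast
    simp only [mul_pow, hsign]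
    nlinarith [mul_le_mul_of_nonneg_left hwallis
      (by positivity : (0 : ℝ) ≤ (2 * m + 1) ^ 3 * (2 * m - 1)‼ ^ 2)]

theorem hermiteFun_pow_four_le {n : ℕ} (hn : 0 < n) {t : ℝ} (ht : 0 ≤ t) (htn : t ^ 2 ≤ n) :
    n * hermiteFun n t ^ 4 ≤ 16 * (n ! : ℝ) ^ 2 := by
  have hnpos : (0 : ℝ) < n := Nat.cast_pos.mpr hn
  have hlow : n / 2 * hermiteFun n t ^ 2 ≤ hermiteEnergy n t := by
    rw [hermiteEnergy]
    nlinarith [sq_nonneg (hermiteFunDeriv n t), sq_nonneg (hermiteFun n t)]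
  have hdecr : hermiteEnergy n t ≤ hermiteEnergy n 0 :=
    antitoneOn_hermiteEnergy n Set.self_mem_Ici ht ht
  have hsq : (n / 2 * hermiteFun n t ^ 2) ^ 2 ≤ 4 * n * (n ! : ℝ) ^ 2 :=
    (pow_le_pow_left₀ (by positivity) (hlow.trans hdecr) 2).trans (hermiteEnergy_zero_sq_le hn)
  nlinarith

theorem stmt_11 :
    ∃ C : ℝ, 0 < C ∧ ∀ d : ℕ, 0 < d →
      ∀ t ∈ Set.Icc (0 : ℝ) ((d : ℝ) ^ ((1 : ℝ) / 6)),
        |normHermite d t| * Real.exp (-t ^ 2 / 4) ≤ C * (d : ℝ) ^ (-(1 : ℝ) / 4) := by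
  refine ⟨2, two_pos, fun d hd t ⟨ht0, htd⟩ => ?_⟩
  have hd1 : (1 : ℝ) ≤ d := Nat.one_le_cast.mpr hd
  have hdt : t ^ 2 ≤ d := by
    calc t ^ 2 ≤ ((d : ℝ) ^ ((1 : ℝ) / 6)) ^ 2 := pow_le_pow_left₀ ht0 htd 2
      _ = (d : ℝ) ^ ((1 : ℝ) / 6 * (2 : ℕ)) := (rpow_mul_natCast (by positivity) _ _).symm
      _ ≤ (d : ℝ) ^ (1 : ℝ) := rpow_le_rpow_of_exponent_le hd1 (by norm_num)
      _ = d := rpow_one _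
  have hfac : (0 : ℝ) < d ! := by positivity
  have hlhs : |normHermite d t| * exp (-t ^ 2 / 4) = |hermiteFun d t| / √(d ! : ℝ) := by
    rw [normHermite, hermiteFun, abs_div, abs_mul, abs_of_pos (exp_pos _),
      abs_of_nonneg (sqrt_nonneg _)]
    ring
  -- raising both sides to the fourth power clears `√(d!)` and `d^(-1/4)`
  rw [hlhs, ← pow_le_pow_iff_left₀ (by positivity) (by positivity) four_ne_zero, div_pow, mul_pow,
    ← rpow_mul_natCast (by positivity), show (√(d ! : ℝ)) ^ 4 = (d ! : ℝ) ^ 2 by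
      rw [show 4 = 2 * 2 by rfl, pow_mul, sq_sqrt hfac.le], div_le_iff₀ (by positivity),
    show (-(1 : ℝ) / 4 * (4 : ℕ)) = -1 by norm_num, rpow_neg_one, (by decide : Even 4).pow_abs,
    mul_right_comm, ← div_eq_mul_inv, le_div_iff₀ (by positivity)]
  linarith [hermiteFun_pow_four_le hd ht0 hdt]
end
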